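/- Let p₁, p₂, r₁, r₂ be probability measures on a measurable space and let t ∈ [0,1]. Then H(t·p₁ + (1−t)·p₂ | t·r₁ + (1−t)·r₂) ≤ t·H(p₁|r₁) + (1−t)·H(p₂|r₂); that is, relative entropy is jointly convex in its two arguments. -/

import Mathlib

/-!
For measures of equal mass, relative entropy coincides with the Kullback–Leibler divergence `klDiv`.
For any `ξ` dominating `ν`, `klDiv μ ν = ∫ (dν/dξ) φ((dμ/dξ)/(dν/dξ)) dξ` with `φ = klFun`
convex. The perspective `(x, y) ↦ y φ(x / y)` of a convex function is subadditive, so `klDiv` is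
subadditive in the pair `(μ, ν)`; together with `klDiv (c • μ) (c • ν) = c * klDiv μ ν` this is
joint convexity.
-/

open MeasureTheory
open scoped ENNReal NNReal Classical

/-- Relative entropy `H(p|r) = ∫ log (dp/dr) dp ∈ [0,∞]` when `p ≪ r` (with value `+∞` when the
integrand is not integrable), and `H(p|r) = +∞` otherwise. -/
noncomputable def relEntropy {Y : Type*} [MeasurableSpace Y] (p r : Measure Y) : EReal :=
  if p ≪ r ∧ Integrable (llr p r) p then ((∫ x, llr p r x ∂p : ℝ) : EReal) else ⊤

theorem ConvexOn.perspective_subadditive {f : ℝ → ℝ} (hf : ConvexOn ℝ (Set.Ici 0) f)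
    {x₁ x₂ y₁ y₂ : ℝ} (hx₁ : 0 ≤ x₁) (hx₂ : 0 ≤ x₂) (hy₁ : 0 ≤ y₁) (hy₂ : 0 ≤ y₂)
    (h₁ : y₁ = 0 → x₁ = 0) (h₂ : y₂ = 0 → x₂ = 0) :
    (y₁ + y₂) * f ((x₁ + x₂) / (y₁ + y₂)) ≤ y₁ * f (x₁ / y₁) + y₂ * f (x₂ / y₂) := by
  rcases hy₁.eq_or_lt with rfl | hy₁
  · simp [h₁ rfl]
  rcases hy₂.eq_or_lt with rfl | hy₂
  · simp [h₂ rfl]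
  have hy : 0 < y₁ + y₂ := by positivity
  have hconv := hf.2 (div_nonneg hx₁ hy₁.le) (div_nonneg hx₂ hy₂.le)
    (div_nonneg hy₁.le hy.le) (div_nonneg hy₂.le hy.le) (by field_simp)
  have hmean : (y₁ / (y₁ + y₂)) * (x₁ / y₁) + (y₂ / (y₁ + y₂)) * (x₂ / y₂)
      = (x₁ + x₂) / (y₁ + y₂) := by
    field_simp
  simp only [smul_eq_mul, hmean] at hconv
  calc (y₁ + y₂) * f ((x₁ + x₂) / (y₁ + y₂))
      ≤ (y₁ + y₂) * ((y₁ / (y₁ + y₂)) * f (x₁ / y₁) + (y₂ / (y₁ + y₂)) * f (x₂ / y₂)) :=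
        mul_le_mul_of_nonneg_left hconv hy.le
    _ = y₁ * f (x₁ / y₁) + y₂ * f (x₂ / y₂) := by field_simp

namespace MeasureTheory.Measure

variable {α : Type*} {mα : MeasurableSpace α} {μ ν ξ : Measure α}
  [SigmaFinite μ] [SigmaFinite ν] [SigmaFinite ξ]

lemma ae_rnDeriv_eq_zero_of_rnDeriv_eq_zero (hμν : μ ≪ ν) :
    ∀ᵐ x ∂ξ, ν.rnDeriv ξ x = 0 → μ.rnDeriv ξ x = 0 := by
  filter_upwards [rnDeriv_mul_rnDeriv (κ := ξ) hμν] with x hx hν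
  rw [← hx, Pi.mul_apply, hν, mul_zero]

lemma ae_toReal_rnDeriv_eq_div (hμν : μ ≪ ν) :
    ∀ᵐ x ∂ξ, ν.rnDeriv ξ x ≠ 0 →
      (μ.rnDeriv ν x).toReal = (μ.rnDeriv ξ x).toReal / (ν.rnDeriv ξ x).toReal := by
  filter_upwards [rnDeriv_mul_rnDeriv (κ := ξ) hμν, rnDeriv_lt_top μ ξ, rnDeriv_lt_top ν ξ]
    with x hx hμ_fin hν_fin hν
  have hν' : (ν.rnDeriv ξ x).toReal ≠ 0 := ENNReal.toReal_ne_zero.2 ⟨hν, hν_fin.ne⟩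
  rw [eq_div_iff hν', ← ENNReal.toReal_mul, ← Pi.mul_apply, hx]

end MeasureTheory.Measure

namespace InformationTheory

variable {α : Type*} {mα : MeasurableSpace α}

lemma klDiv_eq_lintegral_perspective {μ ν ξ : Measure α} [IsFiniteMeasure μ] [IsFiniteMeasure ν]
    [SigmaFinite ξ] (hμν : μ ≪ ν) (hνξ : ν ≪ ξ) :
    klDiv μ ν = ∫⁻ x, ENNReal.ofReal ((ν.rnDeriv ξ x).toReal *
      klFun ((μ.rnDeriv ξ x).toReal / (ν.rnDeriv ξ x).toReal)) ∂ξ := by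
  rw [klDiv_eq_lintegral_klFun_of_ac hμν, ← lintegral_rnDeriv_mul hνξ (by fun_prop)]
  refine lintegral_congr_ae ?_
  filter_upwards [Measure.ae_toReal_rnDeriv_eq_div (ξ := ξ) hμν, Measure.rnDeriv_lt_top ν ξ]
    with x hx hν_fin
  by_cases hν : ν.rnDeriv ξ x = 0
  · simp [hν]
  rw [hx hν, ENNReal.ofReal_mul ENNReal.toReal_nonneg, ENNReal.ofReal_toReal hν_fin.ne]

variable {μ₁ μ₂ ν₁ ν₂ : Measure α} [IsFiniteMeasure μ₁] [IsFiniteMeasure μ₂]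
  [IsFiniteMeasure ν₁] [IsFiniteMeasure ν₂]

lemma klDiv_add_le : klDiv (μ₁ + μ₂) (ν₁ + ν₂) ≤ klDiv μ₁ ν₁ + klDiv μ₂ ν₂ := by
  by_cases h₁ : μ₁ ≪ ν₁
  swap; · simp [h₁]
  by_cases h₂ : μ₂ ≪ ν₂
  swap; · simp [h₂]
  set ξ := ν₁ + ν₂
  rw [klDiv_eq_lintegral_perspective (h₁.add h₂) Measure.AbsolutelyContinuous.rfl,
    klDiv_eq_lintegral_perspective h₁ (Measure.AbsolutelyContinuous.rfl.add_right ν₂),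
    klDiv_eq_lintegral_perspective h₂ (Measure.AbsolutelyContinuous.rfl.add_right' ν₁),
    ← lintegral_add_left (by fun_prop)]
  refine lintegral_mono_ae ?_
  filter_upwards [Measure.rnDeriv_add' μ₁ μ₂ ξ, Measure.rnDeriv_add' ν₁ ν₂ ξ,
    Measure.rnDeriv_lt_top μ₁ ξ, Measure.rnDeriv_lt_top μ₂ ξ,
    Measure.rnDeriv_lt_top ν₁ ξ, Measure.rnDeriv_lt_top ν₂ ξ,
    Measure.ae_rnDeriv_eq_zero_of_rnDeriv_eq_zero (ξ := ξ) h₁,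
    Measure.ae_rnDeriv_eq_zero_of_rnDeriv_eq_zero (ξ := ξ) h₂]
    with x hμ hν hμ₁ hμ₂ hν₁ hν₂ h₁x h₂x
  rw [hμ, hν, Pi.add_apply, Pi.add_apply, ENNReal.toReal_add hμ₁.ne hμ₂.ne,
    ENNReal.toReal_add hν₁.ne hν₂.ne,
    ← ENNReal.ofReal_add (mul_nonneg ENNReal.toReal_nonneg (klFun_nonneg (by positivity)))
      (mul_nonneg ENNReal.toReal_nonneg (klFun_nonneg (by positivity)))]
  refine ENNReal.ofReal_le_ofReal (convexOn_klFun.perspective_subadditive ENNReal.toReal_nonneg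
    ENNReal.toReal_nonneg ENNReal.toReal_nonneg ENNReal.toReal_nonneg (fun h ↦ ?_) (fun h ↦ ?_))
  · simp [h₁x ((ENNReal.toReal_eq_zero_iff _).1 h |>.resolve_right hν₁.ne)]
  · simp [h₂x ((ENNReal.toReal_eq_zero_iff _).1 h |>.resolve_right hν₂.ne)]

lemma klDiv_smul_add_smul_le (c₁ c₂ : ℝ≥0) :
    klDiv (c₁ • μ₁ + c₂ • μ₂) (c₁ • ν₁ + c₂ • ν₂) ≤ c₁ * klDiv μ₁ ν₁ + c₂ * klDiv μ₂ ν₂ := by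
  simpa only [klDiv_smul_same] using
    klDiv_add_le (μ₁ := c₁ • μ₁) (μ₂ := c₂ • μ₂) (ν₁ := c₁ • ν₁) (ν₂ := c₂ • ν₂)

end InformationTheory

open InformationTheory

lemma relEntropy_eq_klDiv {Y : Type*} [MeasurableSpace Y] {p r : Measure Y} [IsFiniteMeasure p]
    [IsFiniteMeasure r] (h : p Set.univ = r Set.univ) : relEntropy p r = klDiv p r := by
  rw [relEntropy]
  split_ifs with hpr
  · rw [← toReal_klDiv_of_measure_eq hpr.1 h, EReal.coe_ennreal_toReal (klDiv_ne_top hpr.1 hpr.2)]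
  · rw [klDiv_eq_top_iff.2 fun hac hint ↦ hpr ⟨hac, hint⟩, EReal.coe_ennreal_top]

theorem relEntropy_convex {Y : Type*} [MeasurableSpace Y] (p₁ p₂ r₁ r₂ : Measure Y)
    [IsProbabilityMeasure p₁] [IsProbabilityMeasure p₂]
    [IsProbabilityMeasure r₁] [IsProbabilityMeasure r₂]
    (t : ℝ) (ht0 : 0 ≤ t) (ht1 : t ≤ 1) :
    relEntropy (ENNReal.ofReal t • p₁ + ENNReal.ofReal (1 - t) • p₂)
               (ENNReal.ofReal t • r₁ + ENNReal.ofReal (1 - t) • r₂)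
      ≤ (t : EReal) * relEntropy p₁ r₁ + ((1 - t : ℝ) : EReal) * relEntropy p₂ r₂ := by
  -- `ENNReal.ofReal s` is by definition the coercion of `s.toNNReal`
  change relEntropy (t.toNNReal • p₁ + (1 - t).toNNReal • p₂)
    (t.toNNReal • r₁ + (1 - t).toNNReal • r₂) ≤ _
  have hcoe {s : ℝ} (hs : 0 ≤ s) : (s : EReal) = ((s.toNNReal : ℝ≥0∞) : EReal) := by
    rw [← ENNReal.ofReal.eq_def, EReal.coe_ennreal_ofReal, max_eq_left hs]
  rw [relEntropy_eq_klDiv (by simp), relEntropy_eq_klDiv (by simp), relEntropy_eq_klDiv (by simp),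
    hcoe ht0, hcoe (sub_nonneg.2 ht1), ← EReal.coe_ennreal_mul, ← EReal.coe_ennreal_mul,
    ← EReal.coe_ennreal_add, EReal.coe_ennreal_le_coe_ennreal_iff]
  exact klDiv_smul_add_smul_le _ _
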